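/- For all n ≥ 2, the matrix identity 2^n · F_3 = 4 · Σ_{l odd, 1 ≤ l ≤ n} (l-1) · C_l holds (equivalently, F_3 = (4/2^n) Σ_{l odd} (l-1) C_l, where the sum is over odd l between 1 and n). -/

import Mathlib

open Finset Matrix

noncomputable section

/-- Hamming weight of a basis label. -/
def hw {n : ℕ} (z : Fin n → Bool) : ℕ := (Finset.univ.filter fun i => z i = true).card

/-- The sign `(-1)^{z i}` of a bit. -/
def sgn (b : Bool) : ℂ := if b = true then -1 else 1

/-- The operator `C_l`: the diagonal matrix with entry
`∑_{S ⊆ Fin n, |S| = l} ∏_{i ∈ S} (-1)^{z i}`. -/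
def Cmat (n l : ℕ) : Matrix (Fin n → Bool) (Fin n → Bool) ℂ :=
  Matrix.diagonal fun z => ∑ S ∈ Finset.powersetCard l (Finset.univ : Finset (Fin n)),
    ∏ i ∈ S, sgn (z i)

/-- The projector `Π_m` onto the Hamming-weight-`m` sector. -/
def Pimat (n m : ℕ) : Matrix (Fin n → Bool) (Fin n → Bool) ℂ :=
  Matrix.diagonal fun z => if hw z = m then 1 else 0

/-- The operator `F_3 = (n-2)(Π_0 - Π_n) - (Π_1 - Π_{n-1})`. -/
def F3mat (n : ℕ) : Matrix (Fin n → Bool) (Fin n → Bool) ℂ :=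
  ((n : ℂ) - 2) • (Pimat n 0 - Pimat n n) - (Pimat n 1 - Pimat n (n-1))

/-! The diagonal entry of `C_l` at `z` is the elementary symmetric function `e_l(x)` of the signs
`x_i = (-1)^{z_i}`. Complementing `z` turns `e_l(x)` into `(-1)^l e_l(x)`, so the sum over odd `l`
is half the difference of the full sums `H(z) = ∑_l (l - 1) e_l(x)` at `z` and at its complement.
As `∑_l e_l(x) t^l = ∏_i (1 + t x_i)`, `H(z)` is `E'(1) - E(1)` for this polynomial `E`, and it
vanishes unless at most one `x_i` is `-1`: it is `(n - 2) 2^(n-1)` in weight `0`, `-2^(n-1)` in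
weight `1` and `0` otherwise. -/

namespace Finset

variable {ι R : Type*} [CommRing R]

theorem sum_powerset_card_mul_prod [DecidableEq ι] (s : Finset ι) (x : ι → R) :
    ∑ t ∈ s.powerset, (#t : R) * ∏ i ∈ t, x i = ∑ j ∈ s, x j * ∏ i ∈ s.erase j, (1 + x i) := by
  induction s using Finset.induction_on with
  | empty => simp
  | insert a s ha ih =>
    have hins : ∀ t ∈ s.powerset, (#(insert a t) : R) * ∏ i ∈ insert a t, x i
        = x a * ((#t : R) * ∏ i ∈ t, x i + ∏ i ∈ t, x i) := fun t ht => by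
      have hat : a ∉ t := fun h => ha (mem_powerset.1 ht h)
      rw [card_insert_of_notMem hat, prod_insert hat]; push_cast; ring
    have herase : ∀ j ∈ s, x j * ∏ i ∈ (insert a s).erase j, (1 + x i)
        = (1 + x a) * (x j * ∏ i ∈ s.erase j, (1 + x i)) := fun j hj => by
      rw [erase_insert_of_ne (ne_of_mem_of_not_mem hj ha).symm,
        prod_insert fun h => ha (mem_of_mem_erase h)]; ring
    rw [sum_powerset_insert ha, sum_insert ha, erase_insert ha, sum_congr rfl hins,
      sum_congr rfl herase, ← mul_sum, ← mul_sum, sum_add_distrib, ih, ← prod_one_add]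
    ring

theorem sum_powersetCard_prod_neg (l : ℕ) (s : Finset ι) (x : ι → R) :
    ∑ t ∈ powersetCard l s, ∏ i ∈ t, -x i = (-1) ^ l * ∑ t ∈ powersetCard l s, ∏ i ∈ t, x i := by
  rw [mul_sum]
  exact sum_congr rfl fun t ht => by rw [prod_neg, (mem_powersetCard.1 ht).2]

theorem sum_filter_odd_two_mul (s : Finset ℕ) (g : ℕ → R) :
    ∑ l ∈ s with Odd l, 2 * g l = ∑ l ∈ s, g l - ∑ l ∈ s, (-1) ^ l * g l := by
  rw [sum_filter, ← sum_sub_distrib]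
  refine sum_congr rfl fun l _ => ?_
  rcases Nat.even_or_odd l with hl | hl
  · simp [hl.neg_one_pow, Nat.not_odd_iff_even.2 hl]
  · rw [if_pos hl, hl.neg_one_pow]; ring

theorem sum_powerset_apply_card_mul_prod (s : Finset ι) (f : ℕ → R) (x : ι → R) :
    ∑ t ∈ s.powerset, f #t * ∏ i ∈ t, x i
      = ∑ l ∈ range (#s + 1), f l * ∑ t ∈ powersetCard l s, ∏ i ∈ t, x i := by
  rw [sum_powerset]
  refine sum_congr rfl fun l _ => ?_
  rw [mul_sum]
  exact sum_congr rfl fun t ht => by rw [(mem_powersetCard.1 ht).2]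

theorem two_mul_sum_odd_powersetCard (s : Finset ι) (f : ℕ → R) (x : ι → R) :
    2 * ∑ l ∈ range (#s + 1) with Odd l, f l * ∑ t ∈ powersetCard l s, ∏ i ∈ t, x i
      = ∑ t ∈ s.powerset, f #t * ∏ i ∈ t, x i - ∑ t ∈ s.powerset, f #t * ∏ i ∈ t, -x i := by
  rw [mul_sum, sum_filter_odd_two_mul, sum_powerset_apply_card_mul_prod,
    sum_powerset_apply_card_mul_prod]
  simp only [sum_powersetCard_prod_neg, mul_left_comm (f _)]

end Finset

section Signs

variable {ι : Type*}

theorem sgn_not (b : Bool) : sgn (!b) = -sgn b := by cases b <;> simp [sgn]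

theorem prod_one_add_sgn (z : ι → Bool) (s : Finset ι) :
    ∏ i ∈ s, (1 + sgn (z i)) = if ∀ i ∈ s, z i = false then 2 ^ #s else 0 := by
  split_ifs with h
  · rw [← prod_const]
    exact prod_congr rfl fun i hi => by rw [h i hi, sgn]; norm_num
  · push Not at h
    obtain ⟨i, hi, hz⟩ := h
    exact prod_eq_zero hi (by simp [sgn, hz])

variable {n : ℕ}

theorem hw_le (z : Fin n → Bool) : hw z ≤ n := by
  simpa [hw] using card_filter_le univ fun i => z i = true

theorem hw_eq_zero_iff (z : Fin n → Bool) : hw z = 0 ↔ ∀ i, z i = false := by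
  simp [hw, filter_eq_empty_iff]

theorem hw_not (z : Fin n → Bool) : hw (fun i => !z i) = n - hw z := by
  have := card_filter_add_card_filter_not (s := univ) (p := fun i => z i = true)
  simp only [card_univ, Fintype.card_fin, Bool.not_eq_true] at this
  simp only [hw, Bool.not_eq_eq_eq_not, Bool.not_true]
  omega

theorem sum_sgn_mul_prod_erase_one_add_sgn (z : Fin n → Bool) :
    ∑ j, sgn (z j) * ∏ i ∈ univ.erase j, (1 + sgn (z i))
      = if hw z = 0 then (n : ℂ) * 2 ^ (n - 1) else if hw z = 1 then -2 ^ (n - 1) else 0 := by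
  have hterm : ∀ j, sgn (z j) * ∏ i ∈ univ.erase j, (1 + sgn (z i))
      = if ∀ i, i ≠ j → z i = false then sgn (z j) * 2 ^ (n - 1) else 0 := fun j => by
    simp only [prod_one_add_sgn, mem_erase, mem_univ, and_true, card_erase_of_mem (mem_univ j),
      card_univ, Fintype.card_fin, mul_ite, mul_zero]
  simp only [hterm]
  obtain h0 | h1 | h2 : hw z = 0 ∨ hw z = 1 ∨ 2 ≤ hw z := by omega
  · simp [(hw_eq_zero_iff z).1 h0, h0, sgn]
  · obtain ⟨j₀, hj₀⟩ := card_eq_one.1 h1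
    have hz : ∀ i, z i = true ↔ i = j₀ := fun i => by simpa using Finset.ext_iff.1 hj₀ i
    rw [if_neg (by omega), if_pos h1, sum_eq_single j₀]
    · rw [if_pos fun i hi => Bool.eq_false_iff.2 (by rwa [Ne, hz]), (hz j₀).2 rfl, sgn]
      norm_num
    · exact fun j _ hj => if_neg fun h => by simpa [(hz j₀).2 rfl] using h j₀ (Ne.symm hj)
    · simp
  · obtain ⟨a, ha, b, hb, hab⟩ := one_lt_card.1 h2
    rw [if_neg (by omega), if_neg (by omega)]
    refine sum_eq_zero fun j _ => if_neg fun h => hab ?_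
    simp only [mem_filter, mem_univ, true_and] at ha hb
    have hj : ∀ i, z i = true → i = j := fun i hi => by_contra fun hij => by simp [h i hij] at hi
    exact (hj a ha).trans (hj b hb).symm

end Signs

def weightedSignSum (n k : ℕ) : ℂ :=
  if k = 0 then ((n : ℂ) - 2) * 2 ^ (n - 1) else if k = 1 then -2 ^ (n - 1) else 0

theorem sum_powerset_card_sub_one_mul_prod_sgn {n : ℕ} (hn : n ≠ 0) (z : Fin n → Bool) :
    ∑ t ∈ (univ : Finset (Fin n)).powerset, ((#t : ℂ) - 1) * ∏ i ∈ t, sgn (z i)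
      = weightedSignSum n (hw z) := by
  simp only [sub_mul, one_mul, sum_sub_distrib, sum_powerset_card_mul_prod, ← prod_one_add]
  rw [sum_sgn_mul_prod_erase_one_add_sgn, prod_one_add_sgn]
  simp only [mem_univ, true_implies, ← hw_eq_zero_iff, card_univ, Fintype.card_fin,
    weightedSignSum, ← mul_pow_sub_one hn (2 : ℂ)]
  split_ifs <;> ring

theorem two_pow_mul_F3_coeff {n k : ℕ} (hn : 2 ≤ n) (hk : k ≤ n) :
    (2 : ℂ) ^ n * (((n : ℂ) - 2) * ((if k = 0 then 1 else 0) - if k = n then 1 else 0)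
      - ((if k = 1 then 1 else 0) - if k = n - 1 then 1 else 0))
      = 2 * (weightedSignSum n k - weightedSignSum n (n - k)) := by
  rw [← mul_pow_sub_one (by omega : n ≠ 0) (2 : ℂ), weightedSignSum, weightedSignSum]
  split_ifs <;> first | omega | ring

theorem four_mul_sum_odd_powersetCard_sgn {n : ℕ} (hn : n ≠ 0) (z : Fin n → Bool) :
    4 * ∑ l ∈ range (n + 1) with Odd l,
        ((l : ℂ) - 1) * ∑ t ∈ powersetCard l univ, ∏ i ∈ t, sgn (z i)
      = 2 * (weightedSignSum n (hw z) - weightedSignSum n (n - hw z)) := by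
  have h := two_mul_sum_odd_powersetCard (univ : Finset (Fin n)) (fun l => (l : ℂ) - 1)
    fun i => sgn (z i)
  simp only [card_univ, Fintype.card_fin, ← sgn_not] at h
  rw [show (4 : ℂ) = 2 * 2 by norm_num, mul_assoc, h, sum_powerset_card_sub_one_mul_prod_sgn hn,
    sum_powerset_card_sub_one_mul_prod_sgn hn, hw_not]

/-- `2^n · F_3 = 4 · ∑_{l odd, 1 ≤ l ≤ n} (l-1) C_l`. -/
theorem stmt6 (n : ℕ) (hn : 2 ≤ n) :
    (2^n : ℂ) • F3mat n
      = (4 : ℂ) • ∑ l ∈ (Finset.range (n+1)).filter (fun l => Odd l),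
          ((l : ℂ) - 1) • Cmat n l := by
  ext z w
  rcases eq_or_ne z w with rfl | hzw
  · simp only [F3mat, Pimat, Cmat, Matrix.smul_apply, Matrix.sub_apply, Matrix.sum_apply,
      diagonal_apply_eq, smul_eq_mul]
    rw [four_mul_sum_odd_powersetCard_sgn (by omega : n ≠ 0), two_pow_mul_F3_coeff hn (hw_le z)]
  · simp [F3mat, Pimat, Cmat, diagonal_apply_ne _ hzw, Matrix.sum_apply]
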